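/- arXiv:2012.14932 — 3 statements merged into one kernel-verified Lean document; each statement's English description precedes it below -/
import Mathlib

section
/- There exists an absolute constant c > 0 such that the following holds. Let k ≥ 2 and n be positive integers, let θ_{l,i} for 1 ≤ l ≤ k, 1 ≤ i ≤ n be i.i.d. random variables uniformly distributed on [0,2π), and define random vectors z_l ∈ ℂ^n by z_{l,i} = e^{ιθ_{l,i}}/√n. Then for every δ ∈ (0,1), if n ≥ 4 log k/(cδ²), the vectors z_1,…,z_k are δ-orthogonal with probability at least 1 − exp(−cδ²n/2). -/
open MeasureTheory ProbabilityTheory Complex Matrix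
open scoped BigOperators ENNReal

noncomputable section

/-- The standard Hermitian inner product on `ℂ^n`. -/
def hInner {n : ℕ} (x y : Fin n → ℂ) : ℂ := ∑ i, (starRingEnd ℂ) (x i) * y i

/-- The `ℓ₂` norm on `ℂ^n`. -/
def hNorm {n : ℕ} (x : Fin n → ℂ) : ℝ := Real.sqrt (∑ i, ‖x i‖ ^ 2)

/-- A family of vectors in `ℂ^n` is `δ`-orthogonal if all distinct pairs have inner
product bounded by `δ` times the product of the norms. -/
def DeltaOrth {n : ℕ} {ι : Type*} (z : ι → (Fin n → ℂ)) (δ : ℝ) : Prop :=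
  ∀ i j, i ≠ j → ‖hInner (z i) (z j)‖ ≤ δ * hNorm (z i) * hNorm (z j)

/-- The uniform probability distribution on `[0, 2π)`. -/
def uniformAngle : Measure ℝ :=
  (ENNReal.ofReal (2 * Real.pi))⁻¹ • volume.restrict (Set.Ico 0 (2 * Real.pi))

/-! For `l ≠ j` the inner product `⟨z_l, z_j⟩` is `(C + ιS)/n`, where `C` and `S` are the sums over
`i` of `cos (θ_{j,i} - θ_{l,i})` and `sin (θ_{j,i} - θ_{l,i})`. The pairs `(θ_{l,i}, θ_{j,i})` are
independent in `i` and `θ_{j,i}` is uniform, so `C` and `S` are sums of `n` independent mean-zero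
variables bounded by `1`. By Hoeffding, `|C|` or `|S|` reaches `δn/2` with probability at most
`4 exp(-δ²n/8)`; outside that event `|⟨z_l, z_j⟩| < δ`. A union bound over the `k²` pairs with
`c = 1/16` finishes, since `n ≥ 64 log k/δ²` gives `4k² ≤ exp(δ²n/16)`. -/

open Measure

lemma ProbabilityTheory.iIndepFun.curry {Ω ι κ 𝓧 : Type*} {mΩ : MeasurableSpace Ω}
    {μ : Measure Ω} [MeasurableSpace 𝓧] {X : ι → κ → Ω → 𝓧} (mX : ∀ i j, Measurable (X i j))
    (h : iIndepFun (fun p : ι × κ => X p.1 p.2) μ) :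
    iIndepFun (fun i ω j => X i j ω) μ := by
  have := h.isProbabilityMeasure
  have _ : ∀ i j, IsProbabilityMeasure (μ.map (X i j)) :=
    fun i j => isProbabilityMeasure_map (mX i j).aemeasurable
  have hlaw : μ.map (fun ω i j => X i j ω) =
      infinitePi fun i => infinitePi fun j => μ.map (X i j) := by
    rw [← infinitePi_map_curry, ← h.map_fun_eq_infinitePi_map (fun p : ι × κ => mX p.1 p.2),
      map_map (by fun_prop) (by fun_prop)]
    rfl
  rw [iIndepFun_iff_map_fun_eq_infinitePi_map (fun i => by fun_prop), hlaw]
  congr 1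
  funext i
  rw [← infinitePi_map_eval (fun i => infinitePi fun j => μ.map (X i j)) i, ← hlaw,
    map_map (measurable_pi_apply i) (by fun_prop)]
  rfl

lemma ProbabilityTheory.iIndepFun.prodMk_of_uncurry {Ω ι κ 𝓧 : Type*}
    {mΩ : MeasurableSpace Ω} {μ : Measure Ω} [MeasurableSpace 𝓧] {θ : κ → ι → Ω → 𝓧}
    (hmeas : ∀ l i, Measurable (θ l i)) (hind : iIndepFun (fun q : κ × ι => θ q.1 q.2) μ)
    (l j : κ) :
    iIndepFun (fun i ω => (θ l i ω, θ j i ω)) μ :=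
  ((hind.precomp Prod.swap_injective).curry (fun i l => hmeas l i)).comp
    (fun _ v => (v l, v j)) fun _ => by fun_prop

lemma integral_cos_uniformAngle : ∫ x, Real.cos x ∂uniformAngle = 0 := by
  rw [uniformAngle, integral_smul_measure, integral_Ico_eq_integral_Ioo,
    ← integral_Ioc_eq_integral_Ioo, ← intervalIntegral.integral_of_le (by positivity),
    integral_cos]
  simp

lemma integral_sin_uniformAngle : ∫ x, Real.sin x ∂uniformAngle = 0 := by
  rw [uniformAngle, integral_smul_measure, integral_Ico_eq_integral_Ioo,
    ← integral_Ioc_eq_integral_Ioo, ← intervalIntegral.integral_of_le (by positivity),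
    integral_sin]
  simp

section RandomAngles

variable {Ω : Type*} {mΩ : MeasurableSpace Ω} {μ : Measure Ω} {f g : Ω → ℝ}

lemma integral_comp_of_map_eq_uniformAngle {h : ℝ → ℝ} (hh : Continuous h) (hf : Measurable f)
    (hunif : μ.map f = uniformAngle) : ∫ ω, h (f ω) ∂μ = ∫ x, h x ∂uniformAngle := by
  rw [← hunif, integral_map hf.aemeasurable hh.aestronglyMeasurable]

lemma integral_comp_mul_comp_eq_zero_of_indepFun {h₁ h₂ : ℝ → ℝ} (hh₁ : Continuous h₁)
    (hh₂ : Continuous h₂) (hf : Measurable f) (hg : Measurable g) (hfg : IndepFun f g μ)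
    (h₁f : ∫ ω, h₁ (f ω) ∂μ = 0) : ∫ ω, h₁ (f ω) * h₂ (g ω) ∂μ = 0 := by
  rw [hfg.integral_fun_comp_mul_comp hf.aemeasurable hg.aemeasurable hh₁.aestronglyMeasurable
    hh₂.aestronglyMeasurable, h₁f, zero_mul]

variable [IsProbabilityMeasure μ]

lemma integrable_comp_mul_comp_of_abs_le_one {h₁ h₂ : ℝ → ℝ} (hh₁ : Continuous h₁)
    (hh₂ : Continuous h₂) (hb₁ : ∀ x, |h₁ x| ≤ 1) (hb₂ : ∀ x, |h₂ x| ≤ 1) (hf : Measurable f)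
    (hg : Measurable g) :
    Integrable (fun ω => h₁ (f ω) * h₂ (g ω)) μ :=
  .of_bound (by fun_prop) 1 (ae_of_all _ fun ω => by
    rw [Real.norm_eq_abs, abs_mul]; exact mul_le_one₀ (hb₁ _) (abs_nonneg _) (hb₂ _))

lemma integral_cos_sub_eq_zero (hf : Measurable f) (hg : Measurable g) (hfg : IndepFun f g μ)
    (hunif : μ.map f = uniformAngle) : ∫ ω, Real.cos (f ω - g ω) ∂μ = 0 := by
  have hcos := integral_comp_of_map_eq_uniformAngle Real.continuous_cos hf hunif
  have hsin := integral_comp_of_map_eq_uniformAngle Real.continuous_sin hf hunif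
  rw [integral_cos_uniformAngle] at hcos
  rw [integral_sin_uniformAngle] at hsin
  simp_rw [Real.cos_sub]
  rw [integral_add (integrable_comp_mul_comp_of_abs_le_one (by fun_prop) (by fun_prop)
      Real.abs_cos_le_one Real.abs_cos_le_one hf hg)
      (integrable_comp_mul_comp_of_abs_le_one (by fun_prop) (by fun_prop)
      Real.abs_sin_le_one Real.abs_sin_le_one hf hg),
    integral_comp_mul_comp_eq_zero_of_indepFun (by fun_prop) (by fun_prop) hf hg hfg hcos,
    integral_comp_mul_comp_eq_zero_of_indepFun (by fun_prop) (by fun_prop) hf hg hfg hsin,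
    add_zero]

lemma integral_sin_sub_eq_zero (hf : Measurable f) (hg : Measurable g) (hfg : IndepFun f g μ)
    (hunif : μ.map f = uniformAngle) : ∫ ω, Real.sin (f ω - g ω) ∂μ = 0 := by
  have hcos := integral_comp_of_map_eq_uniformAngle Real.continuous_cos hf hunif
  have hsin := integral_comp_of_map_eq_uniformAngle Real.continuous_sin hf hunif
  rw [integral_cos_uniformAngle] at hcos
  rw [integral_sin_uniformAngle] at hsin
  simp_rw [Real.sin_sub]
  rw [integral_sub (integrable_comp_mul_comp_of_abs_le_one (by fun_prop) (by fun_prop)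
      Real.abs_sin_le_one Real.abs_cos_le_one hf hg)
      (integrable_comp_mul_comp_of_abs_le_one (by fun_prop) (by fun_prop)
      Real.abs_cos_le_one Real.abs_sin_le_one hf hg),
    integral_comp_mul_comp_eq_zero_of_indepFun (by fun_prop) (by fun_prop) hf hg hfg hsin,
    integral_comp_mul_comp_eq_zero_of_indepFun (by fun_prop) (by fun_prop) hf hg hfg hcos,
    sub_zero]

end RandomAngles

lemma measure_le_abs_sum_le {Ω ι : Type*} {mΩ : MeasurableSpace Ω} {μ : Measure Ω}
    [IsProbabilityMeasure μ] [Fintype ι] {Y : ι → Ω → ℝ} (hind : iIndepFun Y μ)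
    (hmeas : ∀ i, Measurable (Y i)) (hbdd : ∀ i ω, |Y i ω| ≤ 1) (hmean : ∀ i, μ[Y i] = 0)
    {ε : ℝ} (hε : 0 ≤ ε) :
    μ {ω | ε ≤ |∑ i, Y i ω|} ≤
      ENNReal.ofReal (2 * Real.exp (-ε ^ 2 / (2 * Fintype.card ι))) := by
  have hsub : ∀ i ∈ Finset.univ, HasSubgaussianMGF (Y i) 1 μ := fun i _ => by
    convert hasSubgaussianMGF_of_mem_Icc_of_integral_eq_zero (a := -1) (b := 1)
      (hmeas i).aemeasurable (ae_of_all _ fun ω => abs_le.1 (hbdd i ω)) (hmean i)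
    norm_num [← NNReal.coe_inj]
  have hsum := HasSubgaussianMGF.sum_of_iIndepFun hind hsub
  simp only [Finset.sum_const, Finset.card_univ, nsmul_eq_mul, mul_one] at hsum
  have hupper := hsum.measure_ge_le hε
  have hlower := hsum.neg.measure_ge_le hε
  calc μ {ω | ε ≤ |∑ i, Y i ω|}
      ≤ μ ({ω | ε ≤ ∑ i, Y i ω} ∪ {ω | ε ≤ -∑ i, Y i ω}) :=
        measure_mono fun ω (hω : ε ≤ |∑ i, Y i ω|) => le_abs.1 hω
    _ ≤ μ {ω | ε ≤ ∑ i, Y i ω} + μ {ω | ε ≤ -∑ i, Y i ω} := measure_union_le _ _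
    _ ≤ ENNReal.ofReal (Real.exp (-ε ^ 2 / (2 * Fintype.card ι))) +
          ENNReal.ofReal (Real.exp (-ε ^ 2 / (2 * Fintype.card ι))) := by
        rw [← ofReal_measureReal, ← ofReal_measureReal]
        gcongr
        · simpa using hupper
        · simpa using hlower
    _ = ENNReal.ofReal (2 * Real.exp (-ε ^ 2 / (2 * Fintype.card ι))) := by
        rw [← ENNReal.ofReal_add (by positivity) (by positivity), ← two_mul]

def phaseVector (n : ℕ) (x : Fin n → ℝ) : Fin n → ℂ :=
  fun i => Complex.exp ((x i : ℂ) * Complex.I) / (Real.sqrt n : ℂ)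

section PhaseVector

variable {n : ℕ}

lemma hNorm_phaseVector (hn : 0 < n) (x : Fin n → ℝ) : hNorm (phaseVector n x) = 1 := by
  have hentry : ∀ i, ‖phaseVector n x i‖ ^ 2 = 1 / n := fun i => by
    rw [phaseVector, norm_div, Complex.norm_exp_ofReal_mul_I, Complex.norm_real,
      Real.norm_of_nonneg (Real.sqrt_nonneg _), div_pow, Real.sq_sqrt n.cast_nonneg, one_pow]
  simp only [hNorm, hentry, Finset.sum_const, Finset.card_univ, Fintype.card_fin, nsmul_eq_mul]
  rw [mul_one_div_cancel (by positivity), Real.sqrt_one]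

lemma hInner_phaseVector (x y : Fin n → ℝ) :
    hInner (phaseVector n x) (phaseVector n y) =
      (∑ i, Complex.exp (((y i - x i : ℝ) : ℂ) * Complex.I)) / n := by
  rw [hInner, Finset.sum_div]
  refine Finset.sum_congr rfl fun i _ => ?_
  have hsqrt : (Real.sqrt n : ℂ) * (Real.sqrt n : ℂ) = n := by
    rw [← Complex.ofReal_mul, Real.mul_self_sqrt n.cast_nonneg, Complex.ofReal_natCast]
  rw [phaseVector, phaseVector, map_div₀, ← Complex.exp_conj, map_mul, Complex.conj_I,
    Complex.conj_ofReal, Complex.conj_ofReal, div_mul_div_comm, ← Complex.exp_add, hsqrt]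
  congr 2
  push_cast
  ring

lemma norm_hInner_phaseVector_le (x y : Fin n → ℝ) :
    ‖hInner (phaseVector n x) (phaseVector n y)‖ ≤
      (|∑ i, Real.cos (y i - x i)| + |∑ i, Real.sin (y i - x i)|) / n := by
  rw [hInner_phaseVector, norm_div, Complex.norm_natCast]
  gcongr
  refine (Complex.norm_le_abs_re_add_abs_im _).trans_eq ?_
  simp only [Complex.re_sum, Complex.im_sum, Complex.exp_ofReal_mul_I_re,
    Complex.exp_ofReal_mul_I_im]

end PhaseVector

section Tail

variable {Ω : Type*} {mΩ : MeasurableSpace Ω} {μ : Measure Ω} [IsProbabilityMeasure μ] {n : ℕ}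

lemma measure_lt_norm_hInner_phaseVector_le (hn : 0 < n) {x y : Fin n → Ω → ℝ}
    (hx : ∀ i, Measurable (x i)) (hy : ∀ i, Measurable (y i))
    (hind : iIndepFun (fun i ω => (x i ω, y i ω)) μ) (hyx : ∀ i, IndepFun (y i) (x i) μ)
    (hunif : ∀ i, μ.map (y i) = uniformAngle) {δ : ℝ} (hδ : 0 ≤ δ) :
    μ {ω | δ * hNorm (phaseVector n fun i => x i ω) * hNorm (phaseVector n fun i => y i ω) <
        ‖hInner (phaseVector n fun i => x i ω) (phaseVector n fun i => y i ω)‖} ≤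
      ENNReal.ofReal (4 * Real.exp (-(δ ^ 2 * n) / 8)) := by
  set a := δ * n / 2 with ha
  have tail : ∀ h : ℝ → ℝ, Continuous h → (∀ t, |h t| ≤ 1) →
      (∀ i, ∫ ω, h (y i ω - x i ω) ∂μ = 0) →
      μ {ω | a ≤ |∑ i, h (y i ω - x i ω)|} ≤ ENNReal.ofReal (2 * Real.exp (-(δ ^ 2 * n) / 8)) := by
    intro h hh hbdd hmean
    convert measure_le_abs_sum_le (Y := fun i ω => h (y i ω - x i ω))
      (hind.comp (fun _ p => h (p.2 - p.1)) fun _ => by fun_prop)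
      (fun i => by fun_prop) (fun i ω => hbdd _) hmean (ε := a) (by positivity) using 4
    rw [Fintype.card_fin]
    field_simp
    ring
  calc _ ≤ μ ({ω | a ≤ |∑ i, Real.cos (y i ω - x i ω)|} ∪
        {ω | a ≤ |∑ i, Real.sin (y i ω - x i ω)|}) := by
        refine measure_mono fun ω hω => ?_
        rw [Set.mem_ofPred_eq, hNorm_phaseVector hn, hNorm_phaseVector hn, mul_one, mul_one] at hω
        by_contra! hsmall
        simp only [Set.mem_union, Set.mem_ofPred_eq, not_or, not_le] at hsmall
        have hsum_lt : (|∑ i, Real.cos (y i ω - x i ω)| + |∑ i, Real.sin (y i ω - x i ω)|) / n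
            < δ := by
          rw [div_lt_iff₀ (by exact_mod_cast hn)]
          linarith [hsmall.1, hsmall.2, ha]
        exact hω.not_ge ((norm_hInner_phaseVector_le _ _).trans hsum_lt.le)
    _ ≤ _ := measure_union_le _ _
    _ ≤ ENNReal.ofReal (2 * Real.exp (-(δ ^ 2 * n) / 8)) +
          ENNReal.ofReal (2 * Real.exp (-(δ ^ 2 * n) / 8)) :=
        add_le_add
          (tail _ Real.continuous_cos Real.abs_cos_le_one fun i =>
            integral_cos_sub_eq_zero (hy i) (hx i) (hyx i) (hunif i))
          (tail _ Real.continuous_sin Real.abs_sin_le_one fun i =>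
            integral_sin_sub_eq_zero (hy i) (hx i) (hyx i) (hunif i))
    _ = ENNReal.ofReal (4 * Real.exp (-(δ ^ 2 * n) / 8)) := by
        rw [← ENNReal.ofReal_add (by positivity) (by positivity)]
        congr 1
        ring

end Tail

lemma measure_not_deltaOrth_le {Ω ι : Type*} {mΩ : MeasurableSpace Ω} {μ : Measure Ω}
    [Fintype ι] {n : ℕ} (z : ι → Ω → Fin n → ℂ) (δ : ℝ) {p : ℝ≥0∞}
    (hpair : ∀ i j, i ≠ j →
      μ {ω | δ * hNorm (z i ω) * hNorm (z j ω) < ‖hInner (z i ω) (z j ω)‖} ≤ p) :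
    μ {ω | ¬ DeltaOrth (fun i => z i ω) δ} ≤ Fintype.card ι ^ 2 * p := by
  classical
  calc μ {ω | ¬ DeltaOrth (fun i => z i ω) δ}
      ≤ μ (⋃ q ∈ (Finset.univ : Finset ι).offDiag,
          {ω | δ * hNorm (z q.1 ω) * hNorm (z q.2 ω) < ‖hInner (z q.1 ω) (z q.2 ω)‖}) := by
        refine measure_mono fun ω hω => ?_
        simp only [Set.mem_ofPred_eq, DeltaOrth, not_forall, not_le] at hω
        obtain ⟨i, j, hij, hlt⟩ := hω
        exact Set.mem_biUnion (x := (i, j)) (by simpa using hij) hlt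
    _ ≤ ∑ q ∈ (Finset.univ : Finset ι).offDiag,
          μ {ω | δ * hNorm (z q.1 ω) * hNorm (z q.2 ω) < ‖hInner (z q.1 ω) (z q.2 ω)‖} :=
        measure_biUnion_finset_le _ _
    _ ≤ ∑ _q ∈ (Finset.univ : Finset ι).offDiag, p :=
        Finset.sum_le_sum fun q hq => hpair _ _ (Finset.mem_offDiag.1 hq).2.2
    _ ≤ Fintype.card ι ^ 2 * p := by
        rw [Finset.sum_const, nsmul_eq_mul]
        gcongr
        rw [Finset.offDiag_card, Finset.card_univ, ← sq]
        exact_mod_cast Nat.sub_le _ _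

lemma sq_mul_four_mul_exp_le {k n : ℕ} {δ : ℝ} (hk : 2 ≤ k) (h : 64 * Real.log k ≤ δ ^ 2 * n) :
    (k : ℝ) ^ 2 * (4 * Real.exp (-(δ ^ 2 * n) / 8)) ≤ Real.exp (-(δ ^ 2 * n) / 32) := by
  have hk2 : (2 : ℝ) ≤ k := by exact_mod_cast hk
  have hk0 : (0 : ℝ) < k := by linarith
  have hD : 0 ≤ δ ^ 2 * n := by positivity
  calc (k : ℝ) ^ 2 * (4 * Real.exp (-(δ ^ 2 * n) / 8))
      ≤ (k : ℝ) ^ 4 * Real.exp (-(δ ^ 2 * n) / 8) := by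
        rw [← mul_assoc, show (k : ℝ) ^ 4 = k ^ 2 * k ^ 2 by ring]
        gcongr
        nlinarith
    _ = Real.exp (4 * Real.log k + -(δ ^ 2 * n) / 8) := by
        rw [Real.exp_add, ← Real.exp_log hk0, ← Real.exp_nat_mul, Real.log_exp]
        norm_num
    _ ≤ Real.exp (-(δ ^ 2 * n) / 32) := Real.exp_le_exp.2 (by linarith)

/-- approximate orthogonality with high probability, general `k`.
There is an absolute constant `c > 0` such that for i.i.d. uniform angles
`θ_{l,i}` on `[0,2π)` (for `1 ≤ l ≤ k`, `1 ≤ i ≤ n`) and `z_l ∈ ℂⁿ` with entries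
`e^{ιθ_{l,i}}/√n`, for every `δ ∈ (0,1)`: if `n ≥ 4 log k/(cδ²)`, then `z₁,…,z_k` are
`δ`-orthogonal with probability at least `1 − exp(−cδ²n/2)`. -/
theorem stmt1 :
    ∃ c : ℝ, 0 < c ∧
      ∀ (k n : ℕ), 2 ≤ k → 0 < n →
      ∀ (Ω : Type) [MeasureSpace Ω], IsProbabilityMeasure (ℙ : Measure Ω) →
      ∀ (θ : Fin k → Fin n → Ω → ℝ),
        (∀ l i, Measurable (θ l i)) →
        -- the kn angle variables are mutually independent
        iIndepFun (fun q : Fin k × Fin n => θ q.1 q.2) ℙ →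
        -- each is uniformly distributed on [0, 2π)
        (∀ l i, Measure.map (θ l i) ℙ = uniformAngle) →
        ∀ δ : ℝ, 0 < δ → δ < 1 →
          4 * Real.log k / (c * δ ^ 2) ≤ (n : ℝ) →
          ENNReal.ofReal (1 - Real.exp (-c * δ ^ 2 * n / 2)) ≤
            ℙ {ω : Ω |
              DeltaOrth
                (fun l : Fin k =>
                  fun i => Complex.exp ((θ l i ω : ℂ) * Complex.I) / (Real.sqrt n : ℂ))
                δ} := by
  refine ⟨1 / 16, by norm_num, fun k n hk hn Ω _ hP θ hmeas hind hunif δ hδ _ hδn => ?_⟩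
  have hlogk : 64 * Real.log k ≤ δ ^ 2 * n := by
    rw [div_le_iff₀ (by positivity)] at hδn
    linarith
  have hbad : ℙ {ω | ¬ DeltaOrth (fun l => phaseVector n fun i => θ l i ω) δ} ≤
      ENNReal.ofReal (Real.exp (-(1 / 16) * δ ^ 2 * n / 2)) := by
    refine (measure_not_deltaOrth_le _ δ fun l j hlj =>
      measure_lt_norm_hInner_phaseVector_le hn (hmeas l) (hmeas j)
        (hind.prodMk_of_uncurry hmeas l j)
        (fun i => hind.indepFun (show ((j, i) : Fin k × Fin n) ≠ (l, i) by simp [hlj.symm]))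
        (hunif j) hδ.le).trans ?_
    rw [Fintype.card_fin, ← ENNReal.ofReal_natCast, ← ENNReal.ofReal_pow (by positivity),
      ← ENNReal.ofReal_mul (by positivity),
      show -(1 / 16) * δ ^ 2 * n / 2 = -(δ ^ 2 * n) / 32 by ring]
    exact ENNReal.ofReal_le_ofReal (sq_mul_four_mul_exp_le hk hlogk)
  rw [ENNReal.ofReal_sub _ (Real.exp_nonneg _), ENNReal.ofReal_one, tsub_le_iff_right]
  set good := {ω : Ω | DeltaOrth (fun l => phaseVector n fun i => θ l i ω) δ}
  calc 1 = ℙ (Set.univ : Set Ω) := measure_univ.symm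
    _ ≤ ℙ good + ℙ goodᶜ := measure_univ_le_add_compl _
    _ ≤ _ := add_le_add_right hbad _
end
end

section
/- Let n ≥ 2, λ > 0, p_1 > p_2 > 0, let z_1, z_2 ∈ ℂ^n be unit vectors with |⟨z_1, z_2⟩| ≤ δ for some δ ∈ (0,1), and let M = nλ(p_1 z_1 z_1^* + p_2 z_2 z_2^*). Let λ̃_1 ≥ λ̃_2 be the two largest eigenvalues of M and let ṽ_1, ṽ_2 be corresponding orthonormal eigenvectors. Then |⟨z_1, ṽ_1⟩|² ≥ (p_1 − p_2)/√((p_1−p_2)² + 4p_1p_2δ²) and |⟨z_2, ṽ_2⟩|² ≥ (p_1(1−δ²) − p_2)/√((p_1−p_2)² + 4p_1p_2δ²). -/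
/-!
Write `c = nλ` and `s = ⟨z₁, z₂⟩`. In the coordinates `(⟨z₁, v⟩, ⟨z₂, v⟩)` the matrix `M` acts on
`span {z₁, z₂}` as `c` times a `2 × 2` matrix with trace `p₁ + p₂` and determinant
`p₁p₂(1 - |s|²)`; hence `cμ₊` and `cμ₋`, where `μ± = (p₁ + p₂ ± q)/2` and
`q = √((p₁ - p₂)² + 4p₁p₂|s|²)`, are eigenvalues of `M`. Since `M ⪰ 0` and
`tr M = c(p₁ + p₂) = cμ₊ + cμ₋`, they are its two largest eigenvalues.

For a unit eigenvector `v` of `M` with eigenvalue `cμ`, the equations `⟨z₂, Mv⟩ = cμ ⟨z₂, v⟩` and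
`⟨v, Mv⟩ = cμ` give `p₁ |⟨z₁, v⟩|² (2μ - p₁ - p₂) = μ(μ - p₂)`. For `μ₊` this says
`p₁ |⟨z₁, ṽ₁⟩|² q = μ₊(μ₊ - p₂) ≥ p₁(p₁ - p₂)`; with `z₁` and `z₂` exchanged, for `μ₋` it says
`|⟨z₂, ṽ₂⟩|² q = p₁(1 - |s|²) - μ₋ ≥ p₁(1 - δ²) - p₂`. Finally `q` only grows when `|s|` is
replaced by `δ`.
-/

open MeasureTheory ProbabilityTheory Complex Matrix
open scoped BigOperators ENNReal

noncomputable section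

open ComplexConjugate
open scoped ComplexOrder

theorem Matrix.IsHermitian.exists_eigenvalues_eq {ι 𝕜 : Type*} [Fintype ι] [DecidableEq ι]
    [RCLike 𝕜] {A : Matrix ι ι 𝕜} (hA : A.IsHermitian) {x : ι → 𝕜} (hx : x ≠ 0) {t : ℝ}
    (h : A *ᵥ x = (t : 𝕜) • x) : ∃ k, hA.eigenvalues k = t := by
  have ht : Module.End.HasEigenvalue (toLin' A) (t : 𝕜) :=
    Module.End.hasEigenvalue_of_hasEigenvector
      ⟨Module.End.mem_eigenspace_iff.mpr (by simpa using h), hx⟩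
  have hmem := ht.mem_spectrum
  rw [spectrum_toLin', hA.spectrum_eq_image_range] at hmem
  obtain ⟨_, ⟨k, rfl⟩, hk⟩ := hmem
  exact ⟨k, RCLike.ofReal_inj.mp hk⟩

theorem Antitone.first_two_eq_of_sum_eq {n : ℕ} {f : Fin n → ℝ} (hf : Antitone f)
    (hf0 : ∀ k, 0 ≤ f k) {i j : Fin n} (hij : i ≠ j) {a b : ℝ} (hba : b ≤ a) (hi : f i = a)
    (hj : f j = b) (hsum : ∑ k, f k = a + b) (hn : 1 < n) :
    f ⟨0, by omega⟩ = a ∧ f ⟨1, hn⟩ = b := by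
  have h0 : a ≤ f ⟨0, by omega⟩ := hi ▸ hf (Fin.le_def.mpr (Nat.zero_le _))
  have h1 : b ≤ f ⟨1, hn⟩ := by
    rcases Nat.eq_zero_or_pos i with hi0 | hi0
    · have hj1 : (⟨1, hn⟩ : Fin n) ≤ j := by
        rw [Fin.le_def]; have := Fin.val_ne_of_ne hij; dsimp only; omega
      exact hj ▸ hf hj1
    · exact hba.trans (hi ▸ hf (Fin.le_def.mpr hi0))
  have h01 : f ⟨0, by omega⟩ + f ⟨1, hn⟩ ≤ ∑ k, f k :=
    Finset.add_le_sum (fun k _ => hf0 k) (Finset.mem_univ _) (Finset.mem_univ _)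
      (by simp [Fin.ext_iff])
  constructor <;> linarith

section roots

def spectralGap (p1 p2 d : ℝ) : ℝ := √((p1 - p2) ^ 2 + 4 * p1 * p2 * d ^ 2)

def upperRoot (p1 p2 d : ℝ) : ℝ := (p1 + p2 + spectralGap p1 p2 d) / 2

def lowerRoot (p1 p2 d : ℝ) : ℝ := (p1 + p2 - spectralGap p1 p2 d) / 2

variable {p1 p2 d : ℝ}

theorem spectralGap_sq (h : 0 ≤ p1 * p2) :
    spectralGap p1 p2 d ^ 2 = (p1 - p2) ^ 2 + 4 * p1 * p2 * d ^ 2 :=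
  Real.sq_sqrt (by nlinarith [sq_nonneg (p1 - p2), sq_nonneg d])

theorem sub_le_spectralGap (h : 0 ≤ p1 * p2) : p1 - p2 ≤ spectralGap p1 p2 d :=
  (le_abs_self _).trans (Real.abs_le_sqrt (by nlinarith [sq_nonneg d]))

theorem spectralGap_lt_add (hp1 : 0 < p1) (hp2 : 0 < p2) (hd : d ^ 2 < 1) :
    spectralGap p1 p2 d < p1 + p2 := by
  rw [spectralGap, Real.sqrt_lt' (by positivity)]
  nlinarith [mul_pos hp1 hp2]

theorem spectralGap_le_spectralGap {δ : ℝ} (h : 0 ≤ p1 * p2) (hd0 : 0 ≤ d) (hdδ : d ≤ δ) :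
    spectralGap p1 p2 d ≤ spectralGap p1 p2 δ := by
  unfold spectralGap
  gcongr
  nlinarith

theorem upperRoot_isRoot (h : 0 ≤ p1 * p2) :
    upperRoot p1 p2 d ^ 2 - (p1 + p2) * upperRoot p1 p2 d + p1 * p2 * (1 - d ^ 2) = 0 := by
  unfold upperRoot; linear_combination (1 / 4 : ℝ) * spectralGap_sq (d := d) h

theorem lowerRoot_isRoot (h : 0 ≤ p1 * p2) :
    lowerRoot p1 p2 d ^ 2 - (p1 + p2) * lowerRoot p1 p2 d + p1 * p2 * (1 - d ^ 2) = 0 := by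
  unfold lowerRoot; linear_combination (1 / 4 : ℝ) * spectralGap_sq (d := d) h

theorem upperRoot_add_lowerRoot : upperRoot p1 p2 d + lowerRoot p1 p2 d = p1 + p2 := by
  unfold upperRoot lowerRoot; ring

theorem le_upperRoot (h : 0 ≤ p1 * p2) : p1 ≤ upperRoot p1 p2 d := by
  unfold upperRoot; linarith [sub_le_spectralGap (d := d) h]

theorem lowerRoot_le (h : 0 ≤ p1 * p2) : lowerRoot p1 p2 d ≤ p2 := by
  unfold lowerRoot; linarith [sub_le_spectralGap (d := d) h]

theorem lowerRoot_pos (hp1 : 0 < p1) (hp2 : 0 < p2) (hd : d ^ 2 < 1) :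
    0 < lowerRoot p1 p2 d := by
  unfold lowerRoot; linarith [spectralGap_lt_add hp1 hp2 hd]

theorem div_spectralGap_le_of_upperRoot {δ A : ℝ} (hp2 : 0 < p2) (hp12 : p2 < p1)
    (hd0 : 0 ≤ d) (hdδ : d ≤ δ) (hA : 0 ≤ A)
    (h : p1 * A * (2 * upperRoot p1 p2 d - p1 - p2) =
      upperRoot p1 p2 d * (upperRoot p1 p2 d - p2)) :
    (p1 - p2) / spectralGap p1 p2 δ ≤ A := by
  have hp : 0 ≤ p1 * p2 := mul_nonneg (hp2.trans hp12).le hp2.le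
  have hR : 0 < spectralGap p1 p2 δ := (sub_pos.2 hp12).trans_le (sub_le_spectralGap hp)
  have hq : 2 * upperRoot p1 p2 d - p1 - p2 = spectralGap p1 p2 d := by unfold upperRoot; ring
  have hAq : p1 * (p1 - p2) ≤ p1 * (A * spectralGap p1 p2 d) := by
    rw [← mul_assoc, ← hq, h]
    have := le_upperRoot (d := d) hp
    exact mul_le_mul this (by linarith) (by linarith) (by linarith)
  rw [div_le_iff₀ hR]
  calc p1 - p2 ≤ A * spectralGap p1 p2 d := le_of_mul_le_mul_left hAq (by linarith)
    _ ≤ A * spectralGap p1 p2 δ := by gcongr; exact spectralGap_le_spectralGap hp hd0 hdδ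

theorem div_spectralGap_le_of_lowerRoot {δ B : ℝ} (hp2 : 0 < p2) (hp12 : p2 < p1)
    (hd0 : 0 ≤ d) (hdδ : d ≤ δ) (hB : 0 ≤ B)
    (h : p2 * B * (2 * lowerRoot p1 p2 d - p2 - p1) =
      lowerRoot p1 p2 d * (lowerRoot p1 p2 d - p1)) :
    (p1 * (1 - δ ^ 2) - p2) / spectralGap p1 p2 δ ≤ B := by
  have hp : 0 ≤ p1 * p2 := mul_nonneg (hp2.trans hp12).le hp2.le
  have hR : 0 < spectralGap p1 p2 δ := (sub_pos.2 hp12).trans_le (sub_le_spectralGap hp)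
  have hBq : B * spectralGap p1 p2 d = p1 * (1 - d ^ 2) - lowerRoot p1 p2 d := by
    have hq : 2 * lowerRoot p1 p2 d - p2 - p1 = -spectralGap p1 p2 d := by unfold lowerRoot; ring
    rw [hq] at h
    apply mul_left_cancel₀ hp2.ne'
    linear_combination -h - lowerRoot_isRoot (d := d) hp
  rw [div_le_iff₀ hR]
  calc p1 * (1 - δ ^ 2) - p2 ≤ B * spectralGap p1 p2 d := by
        have hdδ2 : d ^ 2 ≤ δ ^ 2 := pow_le_pow_left₀ hd0 hdδ 2
        have := mul_le_mul_of_nonneg_left hdδ2 (hp2.trans hp12).le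
        linarith [lowerRoot_le (d := d) hp]
    _ ≤ B * spectralGap p1 p2 δ := by gcongr; exact spectralGap_le_spectralGap hp hd0 hdδ

end roots

section rankTwo

variable {n : ℕ}

theorem hInner_eq_dotProduct (x y : Fin n → ℂ) : hInner x y = star x ⬝ᵥ y := rfl

theorem hInner_comm (x y : Fin n → ℂ) : hInner y x = conj (hInner x y) := by
  simp [hInner, mul_comm]

theorem norm_hInner_comm (x y : Fin n → ℂ) : ‖hInner y x‖ = ‖hInner x y‖ := by
  rw [hInner_comm, Complex.norm_conj]

@[simp]
theorem hInner_add (w x y : Fin n → ℂ) : hInner w (x + y) = hInner w x + hInner w y :=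
  dotProduct_add _ _ _

@[simp]
theorem hInner_smul (w x : Fin n → ℂ) (a : ℂ) : hInner w (a • x) = a * hInner w x :=
  dotProduct_smul _ _ _

@[simp]
theorem hInner_zero (w : Fin n → ℂ) : hInner w 0 = 0 :=
  dotProduct_zero _

theorem hInner_self_eq_one {x : Fin n → ℂ} (hx : hNorm x = 1) : hInner x x = 1 := by
  rw [hNorm, Real.sqrt_eq_one] at hx
  simp only [hInner, Complex.conj_mul']
  exact_mod_cast hx

def rankTwo (c p1 p2 : ℝ) (z1 z2 : Fin n → ℂ) : Matrix (Fin n) (Fin n) ℂ :=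
  c • (p1 • vecMulVec z1 (star z1) + p2 • vecMulVec z2 (star z2))

def rankTwoEigenvector (p2 μ : ℝ) (z1 z2 : Fin n → ℂ) : Fin n → ℂ :=
  (μ - p2 : ℂ) • z1 + (p2 * conj (hInner z1 z2)) • z2

variable (c p1 p2 : ℝ) (z1 z2 : Fin n → ℂ)

theorem rankTwo_comm : rankTwo c p2 p1 z2 z1 = rankTwo c p1 p2 z1 z2 := by
  rw [rankTwo, rankTwo, add_comm]

theorem rankTwo_mulVec (v : Fin n → ℂ) :
    rankTwo c p1 p2 z1 z2 *ᵥ v = (c * p1 * hInner z1 v) • z1 + (c * p2 * hInner z2 v) • z2 := by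
  simp only [rankTwo, smul_mulVec, add_mulVec, vecMulVec_mulVec, op_smul_eq_smul, smul_add,
    ← smul_assoc, smul_eq_mul, Complex.real_smul, Complex.ofReal_mul, hInner_eq_dotProduct,
    mul_assoc]

theorem hInner_rankTwo_mulVec (w v : Fin n → ℂ) :
    hInner w (rankTwo c p1 p2 z1 z2 *ᵥ v) =
      c * p1 * hInner z1 v * hInner w z1 + c * p2 * hInner z2 v * hInner w z2 := by
  simp [rankTwo_mulVec, mul_comm]

theorem rankTwo_trace :
    (rankTwo c p1 p2 z1 z2).trace = c * (p1 * hInner z1 z1 + p2 * hInner z2 z2) := by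
  simp [rankTwo, hInner_eq_dotProduct, dotProduct_comm _ (star _), Complex.real_smul, mul_add]

variable {c p1 p2 z1 z2}

theorem rankTwo_posSemidef (hc : 0 ≤ c) (hp1 : 0 ≤ p1) (hp2 : 0 ≤ p2) :
    (rankTwo c p1 p2 z1 z2).PosSemidef :=
  (((posSemidef_vecMulVec_self_star z1).smul hp1).add
    ((posSemidef_vecMulVec_self_star z2).smul hp2)).smul hc

theorem rankTwo_mulVec_rankTwoEigenvector (hz1 : hInner z1 z1 = 1) (hz2 : hInner z2 z2 = 1)
    {μ : ℝ} (hμ : μ ^ 2 - (p1 + p2) * μ + p1 * p2 * (1 - ‖hInner z1 z2‖ ^ 2) = 0) :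
    rankTwo c p1 p2 z1 z2 *ᵥ rankTwoEigenvector p2 μ z1 z2 =
      ((c * μ : ℝ) : ℂ) • rankTwoEigenvector p2 μ z1 z2 := by
  have hμ' : (μ : ℂ) ^ 2 - (p1 + p2) * μ +
      p1 * p2 * (1 - hInner z1 z2 * conj (hInner z1 z2)) = 0 := by
    rw [Complex.mul_conj']; exact_mod_cast hμ
  ext i
  simp only [rankTwoEigenvector, rankTwo_mulVec, hInner_add, hInner_smul, hz1, hz2,
    hInner_comm z1 z2, Pi.add_apply, Pi.smul_apply, smul_eq_mul, Complex.ofReal_mul]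
  linear_combination (-(c : ℂ) * z1 i) * hμ'

theorem rankTwoEigenvector_ne_zero (hz1 : hInner z1 z1 = 1) (hz2 : hInner z2 z2 = 1) {μ : ℝ}
    (hμ0 : μ ≠ 0) (hμp2 : μ ≠ p2) : rankTwoEigenvector p2 μ z1 z2 ≠ 0 := by
  intro h
  have h1 := congrArg (hInner z1) h
  have h2 := congrArg (hInner z2) h
  simp only [rankTwoEigenvector, hInner_add, hInner_smul, hInner_zero, hz1, hz2,
    hInner_comm z1 z2] at h1 h2
  have hs : hInner z1 z2 = 0 := by
    have : (μ : ℂ) * conj (hInner z1 z2) = 0 := by linear_combination h2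
    simpa [hμ0] using this
  rw [hs] at h1
  exact hμp2 (by exact_mod_cast (by simpa [sub_eq_zero] using h1 : (μ : ℂ) = p2))

theorem rankTwo_overlap (hc : c ≠ 0) (hz2 : hInner z2 z2 = 1) {μ : ℝ}
    (hμ : μ ^ 2 - (p1 + p2) * μ + p1 * p2 * (1 - ‖hInner z1 z2‖ ^ 2) = 0) (hμp2 : μ ≠ p2)
    {v : Fin n → ℂ} (hv : hInner v v = 1)
    (hMv : rankTwo c p1 p2 z1 z2 *ᵥ v = ((c * μ : ℝ) : ℂ) • v) :
    p1 * ‖hInner z1 v‖ ^ 2 * (2 * μ - p1 - p2) = μ * (μ - p2) := by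
  set s := hInner z1 z2
  set u1 := hInner z1 v
  set u2 := hInner z2 v
  have hc' : (c : ℂ) ≠ 0 := by exact_mod_cast hc
  have e2 : ((μ - p2 : ℝ) : ℂ) * u2 = p1 * (conj s * u1) := by
    have h := hInner_rankTwo_mulVec c p1 p2 z1 z2 z2 v
    rw [hMv, hz2, hInner_comm z1 z2, hInner_smul] at h
    push_cast at h ⊢
    exact mul_left_cancel₀ hc' (by linear_combination h)
  have e3 : p1 * ‖u1‖ ^ 2 + p2 * ‖u2‖ ^ 2 = μ := by
    have h := hInner_rankTwo_mulVec c p1 p2 z1 z2 v v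
    rw [hMv, hInner_smul, hv, hInner_comm z1 v, hInner_comm z2 v] at h
    have h' : ((c * (p1 * ‖u1‖ ^ 2 + p2 * ‖u2‖ ^ 2) : ℝ) : ℂ) = ((c * μ : ℝ) : ℂ) := by
      push_cast at h ⊢
      linear_combination
        -h - (c * p1 : ℂ) * Complex.mul_conj' u1 - (c * p2 : ℂ) * Complex.mul_conj' u2
    exact mul_left_cancel₀ hc (Complex.ofReal_injective h')
  have n2 : (μ - p2) ^ 2 * ‖u2‖ ^ 2 = p1 ^ 2 * (‖s‖ ^ 2 * ‖u1‖ ^ 2) := by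
    have h := congrArg (‖·‖ ^ 2) e2
    simp only [norm_mul, Complex.norm_real, Complex.norm_conj, Real.norm_eq_abs, mul_pow,
      sq_abs] at h
    linear_combination h
  apply mul_left_cancel₀ (sub_ne_zero.mpr hμp2)
  linear_combination -p2 * n2 + (μ - p2) ^ 2 * e3 + p1 * ‖u1‖ ^ 2 * hμ

theorem lowerRoot_isRoot_comm (hp : 0 ≤ p1 * p2) :
    lowerRoot p1 p2 ‖hInner z1 z2‖ ^ 2 - (p2 + p1) * lowerRoot p1 p2 ‖hInner z1 z2‖ +
      p2 * p1 * (1 - ‖hInner z2 z1‖ ^ 2) = 0 := by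
  rw [norm_hInner_comm z1 z2]
  linear_combination lowerRoot_isRoot hp

theorem rankTwo_sum_eigenvalues (hz1 : hInner z1 z1 = 1) (hz2 : hInner z2 z2 = 1)
    (hM : (rankTwo c p1 p2 z1 z2).IsHermitian) : ∑ k, hM.eigenvalues k = c * (p1 + p2) := by
  have htr := hM.trace_eq_sum_eigenvalues
  rw [rankTwo_trace, hz1, hz2] at htr
  have hC : ((∑ k, hM.eigenvalues k : ℝ) : ℂ) = ((c * (p1 + p2) : ℝ) : ℂ) := by
    push_cast; linear_combination -htr
  exact_mod_cast hC

theorem rankTwo_top_eigenvalues (hc : 0 < c) (hp2 : 0 < p2) (hp12 : p2 < p1)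
    (hz1 : hInner z1 z1 = 1) (hz2 : hInner z2 z2 = 1) (hs : ‖hInner z1 z2‖ < 1)
    (hM : (rankTwo c p1 p2 z1 z2).IsHermitian) {ev : Fin n → ℝ} (hanti : Antitone ev)
    (hperm : ∃ σ : Equiv.Perm (Fin n), ∀ i, ev i = hM.eigenvalues (σ i)) (hn : 1 < n) :
    ev ⟨0, by omega⟩ = c * upperRoot p1 p2 ‖hInner z1 z2‖ ∧
      ev ⟨1, hn⟩ = c * lowerRoot p1 p2 ‖hInner z1 z2‖ := by
  obtain ⟨σ, hσ⟩ := hperm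
  set d := ‖hInner z1 z2‖
  have hp : 0 ≤ p1 * p2 := mul_nonneg (hp2.trans hp12).le hp2.le
  have hlu : c * lowerRoot p1 p2 d < c * upperRoot p1 p2 d := by
    have := lowerRoot_le (d := d) hp
    have := le_upperRoot (d := d) hp
    exact mul_lt_mul_of_pos_left (by linarith) hc
  obtain ⟨k1, hk1⟩ := hM.exists_eigenvalues_eq (t := c * upperRoot p1 p2 d)
    (rankTwoEigenvector_ne_zero hz1 hz2 (by linarith [le_upperRoot (d := d) hp])
      (by linarith [le_upperRoot (d := d) hp]))
    (rankTwo_mulVec_rankTwoEigenvector hz1 hz2 (upperRoot_isRoot hp))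
  -- `lowerRoot = p₂` when `z₁ ⊥ z₂`, so here the eigenvector is built from `z₂` instead.
  obtain ⟨k2, hk2⟩ := hM.exists_eigenvalues_eq (t := c * lowerRoot p1 p2 d)
    (rankTwoEigenvector_ne_zero hz2 hz1
      (lowerRoot_pos (hp2.trans hp12) hp2 (by nlinarith [norm_nonneg (hInner z1 z2)])).ne'
      (by linarith [lowerRoot_le (d := d) hp]))
    (rankTwo_comm c p1 p2 z1 z2 ▸
      rankTwo_mulVec_rankTwoEigenvector hz2 hz1 (lowerRoot_isRoot_comm hp))
  have hk12 : σ.symm k1 ≠ σ.symm k2 := fun h => by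
    have := congrArg hM.eigenvalues (σ.symm.injective h)
    rw [hk1, hk2] at this
    exact hlu.ne' this
  have hev : ∀ k, ev (σ.symm k) = hM.eigenvalues k := fun k => by simp [hσ]
  refine hanti.first_two_eq_of_sum_eq (fun i => hσ i ▸ ?_) hk12 hlu.le
    ((hev k1).trans hk1) ((hev k2).trans hk2) ?_ hn
  · exact (rankTwo_posSemidef hc.le (hp2.trans hp12).le hp2.le).eigenvalues_nonneg _
  · rw [Fintype.sum_equiv σ _ _ hσ, rankTwo_sum_eigenvalues hz1 hz2 hM, ← mul_add,
      upperRoot_add_lowerRoot]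

end rankTwo

/-- Lemma: eigenvector correlation bounds for the expected matrix of
bi-synchronization. With `M = nλ(p₁z₁z₁^* + p₂z₂z₂^*)`, `|⟨z₁,z₂⟩| ≤ δ`, and `ṽ₁, ṽ₂`
orthonormal eigenvectors for the two largest eigenvalues `λ̃₁ ≥ λ̃₂`, one has
`|⟨z₁,ṽ₁⟩|² ≥ (p₁−p₂)/√((p₁−p₂)² + 4p₁p₂δ²)` and
`|⟨z₂,ṽ₂⟩|² ≥ (p₁(1−δ²)−p₂)/√((p₁−p₂)² + 4p₁p₂δ²)`. -/
theorem stmt4 {n : ℕ} (hn : 2 ≤ n) (lam p1 p2 δ : ℝ)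
    (hlam : 0 < lam) (hp2 : 0 < p2) (hp12 : p2 < p1)
    (hδ1 : δ < 1)
    (z1 z2 : Fin n → ℂ) (hz1 : hNorm z1 = 1) (hz2 : hNorm z2 = 1)
    (horth : ‖hInner z1 z2‖ ≤ δ)
    (M : Matrix (Fin n) (Fin n) ℂ)
    (hMdef : M = Matrix.of fun i j =>
      ((n : ℂ) * (lam : ℂ)) *
        ((p1 : ℂ) * z1 i * (starRingEnd ℂ) (z1 j) + (p2 : ℂ) * z2 i * (starRingEnd ℂ) (z2 j)))
    (hM : M.IsHermitian)
    (ev : Fin n → ℝ) (hanti : Antitone ev)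
    (hperm : ∃ σ : Equiv.Perm (Fin n), ∀ i, ev i = hM.eigenvalues (σ i))
    (vt1 vt2 : Fin n → ℂ)
    (hvt1n : hNorm vt1 = 1) (hvt2n : hNorm vt2 = 1)
    (hvt1 : ∀ i, M.mulVec vt1 i = (ev ⟨0, by omega⟩ : ℂ) * vt1 i)
    (hvt2 : ∀ i, M.mulVec vt2 i = (ev ⟨1, by omega⟩ : ℂ) * vt2 i) :
    (p1 - p2) / Real.sqrt ((p1 - p2) ^ 2 + 4 * p1 * p2 * δ ^ 2)
        ≤ ‖hInner z1 vt1‖ ^ 2 ∧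
    (p1 * (1 - δ ^ 2) - p2) / Real.sqrt ((p1 - p2) ^ 2 + 4 * p1 * p2 * δ ^ 2)
        ≤ ‖hInner z2 vt2‖ ^ 2 := by
  set c := (n : ℝ) * lam
  have hc : 0 < c := mul_pos (by exact_mod_cast (by omega : 0 < n)) hlam
  obtain rfl : M = rankTwo c p1 p2 z1 z2 := by
    rw [hMdef]; ext i j
    simp only [rankTwo, of_apply, Matrix.smul_apply, Matrix.add_apply, vecMulVec_apply,
      Pi.star_apply, Complex.real_smul, Complex.star_def, c]
    push_cast; ring
  have hp : 0 ≤ p1 * p2 := mul_nonneg (hp2.trans hp12).le hp2.le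
  have hz1' := hInner_self_eq_one hz1
  have hz2' := hInner_self_eq_one hz2
  set d := ‖hInner z1 z2‖
  obtain ⟨ht1, ht2⟩ :=
    rankTwo_top_eigenvalues hc hp2 hp12 hz1' hz2' (horth.trans_lt hδ1) hM hanti hperm (by omega)
  have hv1 : rankTwo c p1 p2 z1 z2 *ᵥ vt1 = ((c * upperRoot p1 p2 d : ℝ) : ℂ) • vt1 :=
    funext fun i => by simpa [ht1] using hvt1 i
  have hv2 : rankTwo c p2 p1 z2 z1 *ᵥ vt2 = ((c * lowerRoot p1 p2 d : ℝ) : ℂ) • vt2 :=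
    funext fun i => by simpa [rankTwo_comm, ht2] using hvt2 i
  have hoverlap1 := rankTwo_overlap hc.ne' hz2' (upperRoot_isRoot hp)
    (by linarith [le_upperRoot (d := d) hp]) (hInner_self_eq_one hvt1n) hv1
  have hoverlap2 := rankTwo_overlap hc.ne' hz1' (lowerRoot_isRoot_comm hp)
    (by linarith [lowerRoot_le (d := d) hp]) (hInner_self_eq_one hvt2n) hv2
  exact ⟨div_spectralGap_le_of_upperRoot hp2 hp12 (norm_nonneg _) horth (sq_nonneg _) hoverlap1,
    div_spectralGap_le_of_lowerRoot hp2 hp12 (norm_nonneg _) horth (sq_nonneg _) hoverlap2⟩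
end
end

section
/- Let x, y, x̄ ∈ ℂ^n be vectors of unit ℓ₂ norm, and let ε, ε̄ ∈ [0,1] satisfy |⟨x, y⟩|² ≥ 1 − ε and |⟨x̄, y⟩|² ≥ 1 − ε̄. Then |⟨x, x̄⟩|² ≥ 1 − (√ε + √(2ε̄))². -/
open MeasureTheory ProbabilityTheory Complex Matrix
open scoped BigOperators ENNReal

noncomputable section

/-!
For unit vectors, `√(1 - |⟨u, v⟩|²)` is the distance from `u` to the complex line through `v`,
attained at the orthogonal projection `⟨v, u⟩ v`. Projecting `u` onto `v` and then onto `w`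
shows that this quantity satisfies the triangle inequality. Applied to `x, y, x̄` it gives
`√(1 - |⟨x, x̄⟩|²) ≤ √ε + √ε̄ ≤ √ε + √(2ε̄)`, and squaring finishes the proof.
-/

open scoped InnerProductSpace

section UnitVectors

variable {E : Type*} [NormedAddCommGroup E] [InnerProductSpace ℂ E]

theorem norm_sub_smul_sq_of_norm_eq_one {v : E} (hv : ‖v‖ = 1) (u : E) (c : ℂ) :
    ‖u - c • v‖ ^ 2 = ‖u‖ ^ 2 - ‖⟪v, u⟫_ℂ‖ ^ 2 + ‖⟪v, u⟫_ℂ - c‖ ^ 2 := by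
  rw [norm_sub_sq (𝕜 := ℂ), inner_smul_right, ← inner_conj_symm, norm_smul, hv, mul_one]
  simp only [Complex.sq_norm, Complex.normSq_sub, RCLike.re_to_complex, Complex.mul_re,
    Complex.conj_re, Complex.conj_im]
  ring

theorem sqrt_one_sub_norm_inner_sq_le_norm_sub_smul {u w : E} (hu : ‖u‖ = 1) (hw : ‖w‖ = 1)
    (c : ℂ) : √(1 - ‖⟪w, u⟫_ℂ‖ ^ 2) ≤ ‖u - c • w‖ := by
  rw [Real.sqrt_le_left (norm_nonneg _), norm_sub_smul_sq_of_norm_eq_one hw, hu, one_pow]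
  exact le_add_of_nonneg_right (sq_nonneg _)

theorem norm_sub_inner_smul_of_norm_eq_one {u v : E} (hu : ‖u‖ = 1) (hv : ‖v‖ = 1) :
    ‖u - ⟪v, u⟫_ℂ • v‖ = √(1 - ‖⟪v, u⟫_ℂ‖ ^ 2) := by
  rw [← Real.sqrt_sq (norm_nonneg _), norm_sub_smul_sq_of_norm_eq_one hv, hu]
  simp

theorem sqrt_one_sub_norm_inner_sq_triangle {u v w : E} (hu : ‖u‖ = 1) (hv : ‖v‖ = 1)
    (hw : ‖w‖ = 1) :
    √(1 - ‖⟪w, u⟫_ℂ‖ ^ 2) ≤ √(1 - ‖⟪v, u⟫_ℂ‖ ^ 2) + √(1 - ‖⟪w, v⟫_ℂ‖ ^ 2) := by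
  set a := ⟪v, u⟫_ℂ
  set b := ⟪w, v⟫_ℂ
  have ha : ‖a‖ ≤ 1 := by simpa [hu, hv] using norm_inner_le_norm (𝕜 := ℂ) v u
  have split : u - (a * b) • w = (u - a • v) + a • (v - b • w) := by
    rw [smul_sub, mul_smul]; abel
  calc √(1 - ‖⟪w, u⟫_ℂ‖ ^ 2) ≤ ‖u - (a * b) • w‖ :=
        sqrt_one_sub_norm_inner_sq_le_norm_sub_smul hu hw _
    _ ≤ ‖u - a • v‖ + ‖a‖ * ‖v - b • w‖ := by rw [split, ← norm_smul]; exact norm_add_le _ _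
    _ ≤ ‖u - a • v‖ + ‖v - b • w‖ := by gcongr; exact mul_le_of_le_one_left (norm_nonneg _) ha
    _ = √(1 - ‖a‖ ^ 2) + √(1 - ‖b‖ ^ 2) := by
        rw [norm_sub_inner_smul_of_norm_eq_one hu hv, norm_sub_inner_smul_of_norm_eq_one hv hw]

end UnitVectors

theorem hInner_eq_inner {n : ℕ} (x y : Fin n → ℂ) :
    hInner x y = ⟪(WithLp.toLp 2 x : EuclideanSpace ℂ (Fin n)), WithLp.toLp 2 y⟫_ℂ := by
  simp only [hInner, PiLp.inner_apply, RCLike.inner_apply, mul_comm]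

theorem hNorm_eq_norm {n : ℕ} (x : Fin n → ℂ) :
    hNorm x = ‖(WithLp.toLp 2 x : EuclideanSpace ℂ (Fin n))‖ := by
  simp [hNorm, EuclideanSpace.norm_eq]

theorem stmt6_general {n : ℕ} (x y xbar : Fin n → ℂ)
    (hx : hNorm x = 1) (hy : hNorm y = 1) (hxbar : hNorm xbar = 1)
    (ε εbar : ℝ)
    (h1 : 1 - ε ≤ ‖hInner x y‖ ^ 2)
    (h2 : 1 - εbar ≤ ‖hInner xbar y‖ ^ 2) :
    1 - (Real.sqrt ε + Real.sqrt (2 * εbar)) ^ 2 ≤ ‖hInner x xbar‖ ^ 2 := by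
  rw [hNorm_eq_norm] at hx hy hxbar
  rw [hInner_eq_inner] at h1 h2 ⊢
  set X : EuclideanSpace ℂ (Fin n) := WithLp.toLp 2 x
  set Y : EuclideanSpace ℂ (Fin n) := WithLp.toLp 2 y
  set Z : EuclideanSpace ℂ (Fin n) := WithLp.toLp 2 xbar
  have hεbar : 0 ≤ εbar := by
    have : ‖⟪Z, Y⟫_ℂ‖ ^ 2 ≤ 1 :=
      pow_le_one₀ (norm_nonneg _) (by simpa [hxbar, hy] using norm_inner_le_norm (𝕜 := ℂ) Z Y)
    linarith
  have hsin : √(1 - ‖⟪X, Z⟫_ℂ‖ ^ 2) ≤ √ε + √(2 * εbar) :=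
    calc _ ≤ √(1 - ‖⟪Y, Z⟫_ℂ‖ ^ 2) + √(1 - ‖⟪X, Y⟫_ℂ‖ ^ 2) :=
          sqrt_one_sub_norm_inner_sq_triangle hxbar hy hx
      _ ≤ √(2 * εbar) + √ε := by
          gcongr
          · rw [norm_inner_symm]; linarith
          · linarith
      _ = √ε + √(2 * εbar) := add_comm _ _
  have := (Real.sqrt_le_left (by positivity)).1 hsin
  linarith

/-- Proposition: chained bound on inner products.
If `x, y, x̄` are unit vectors in `ℂ^n` with `|⟨x,y⟩|² ≥ 1 - ε` and `|⟨x̄,y⟩|² ≥ 1 - ε̄`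
for `ε, ε̄ ∈ [0,1]`, then `|⟨x,x̄⟩|² ≥ 1 - (√ε + √(2ε̄))²`. -/
theorem stmt6 {n : ℕ} (x y xbar : Fin n → ℂ)
    (hx : hNorm x = 1) (hy : hNorm y = 1) (hxbar : hNorm xbar = 1)
    (ε εbar : ℝ) (hε : ε ∈ Set.Icc (0:ℝ) 1) (hεbar : εbar ∈ Set.Icc (0:ℝ) 1)
    (h1 : 1 - ε ≤ ‖hInner x y‖ ^ 2)
    (h2 : 1 - εbar ≤ ‖hInner xbar y‖ ^ 2) :
    1 - (Real.sqrt ε + Real.sqrt (2 * εbar)) ^ 2 ≤ ‖hInner x xbar‖ ^ 2 :=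
  stmt6_general x y xbar hx hy hxbar ε εbar h1 h2
end
end
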